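/- arXiv:2108.11058 — 2 statements merged into one kernel-verified Lean document; each statement's English description precedes it below -/
import Mathlib

section
/- Let {f_t}_{t∈[0,1]} be a continuous full family of C¹ unimodal maps and let V be a periodic point component of G_n^{−1}(0) of period n. If V ∩ ({1} × ℝ) ≠ ∅, then V ∩ ({1} × ℝ) contains at least two points. -/
/-- A `C¹` unimodal map: `f' > 0` on `(-∞,0)`, `f' < 0` on `(0,∞)`, `f' 0 = 0`. -/
def Unimodal (f : ℝ → ℝ) : Prop :=
  ContDiff ℝ 1 f ∧ (∀ x < (0 : ℝ), 0 < deriv f x) ∧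
    (∀ x > (0 : ℝ), deriv f x < 0) ∧ deriv f 0 = 0

/-- A `C¹` unimodal map is a horseshoe: it has exactly two fixed points, the left
one being `a`, and there are `a < a₁ < b₁ < b` with `f b = a`, `f a₁ = f b₁ = b`
and `|f'| > 1` on `[a,a₁] ∪ [b₁,b]`. -/
def Horseshoe (f : ℝ → ℝ) : Prop :=
  Unimodal f ∧ ∃ a c : ℝ, a < c ∧ {x : ℝ | f x = x} = {a, c} ∧
    ∃ a₁ b₁ b : ℝ, a < a₁ ∧ a₁ < b₁ ∧ b₁ < b ∧ f b = a ∧ f a₁ = b ∧ f b₁ = b ∧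
      ∀ x ∈ Set.Icc a a₁ ∪ Set.Icc b₁ b, 1 < |deriv f x|

/-- A continuous full family of `C¹` unimodal maps `f t`, `t ∈ [0,1]`:
`(t,x) ↦ f t x` and `(t,x) ↦ (f t)' x` are continuous on `[0,1] × ℝ`, each `f t`
is unimodal, `f 0` has no fixed point, `f 1` is a horseshoe, and there is `M > 0`
such that all fixed points of every `f t` lie in `[-M, M]`. -/
def ContFullFamily (f : ℝ → ℝ → ℝ) : Prop :=
  (∀ t ∈ Set.Icc (0 : ℝ) 1, Unimodal (f t)) ∧
  ContinuousOn (fun p : ℝ × ℝ => f p.1 p.2) (Set.Icc (0 : ℝ) 1 ×ˢ Set.univ) ∧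
  ContinuousOn (fun p : ℝ × ℝ => deriv (f p.1) p.2) (Set.Icc (0 : ℝ) 1 ×ˢ Set.univ) ∧
  (∀ x : ℝ, f 0 x ≠ x) ∧
  Horseshoe (f 1) ∧
  (∃ M > (0 : ℝ), ∀ t ∈ Set.Icc (0 : ℝ) 1, ∀ x : ℝ, f t x = x → x ∈ Set.Icc (-M) M)

open scoped Classical in
/-- The quotient map `G_m` of the family: for odd `m`, `G_m (t,x) = f_t^m x - x`;
for even `m = 2n`, it is `(f_t^{2n} x - x)/(f_t^n x - x)` off the fixed-point set
of `f_t^n`, and `(f_t^n)' x + 1` on it. -/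
noncomputable def Gmap (f : ℝ → ℝ → ℝ) (m : ℕ) (t x : ℝ) : ℝ :=
  if Odd m then (f t)^[m] x - x
  else if (f t)^[m / 2] x = x then deriv ((f t)^[m / 2]) x + 1
  else ((f t)^[m] x - x) / ((f t)^[m / 2] x - x)

/-- The zero set `G_m⁻¹(0) ⊆ [0,1] × ℝ`. -/
def Zset (f : ℝ → ℝ → ℝ) (m : ℕ) : Set (ℝ × ℝ) :=
  {p : ℝ × ℝ | p.1 ∈ Set.Icc (0 : ℝ) 1 ∧ Gmap f m p.1 p.2 = 0}

/-- `V` is a periodic point component of period-`m` data: a connected component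
of `G_m⁻¹(0)`. -/
def IsPPComponent (f : ℝ → ℝ → ℝ) (m : ℕ) (V : Set (ℝ × ℝ)) : Prop :=
  ∃ p ∈ Zset f m, V = connectedComponentIn (Zset f m) p

/-- The period of a periodic point component `V` is `n`: the maximum of the
minimal periods of its points is `n`. -/
def CompPeriod (f : ℝ → ℝ → ℝ) (V : Set (ℝ × ℝ)) (n : ℕ) : Prop :=
  (∀ p ∈ V, Function.minimalPeriod (f p.1) p.2 ≤ n) ∧
  (∃ p ∈ V, Function.minimalPeriod (f p.1) p.2 = n)

/-!
Zeros of `G_n` on the line `t = 1` are simple: the horseshoe `f_1` expands along its periodic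
orbits, so `G_n(1, ·)` changes sign at each of them. The zero set of `G_n` is compact and avoids
`t = 0`, where `f_0` has no periodic points. If the component `V` met `t = 1` only at `(1, x)`, it
would have a compact neighbourhood `K` in the zero set, isolated from the rest of it, with the
same trace on `t = 1`. Counting the sign changes of `G_n(t, ·)` on a fine grid around `K` gives
a discrete degree that does not change with `t`; it vanishes below `K`, but at `t = 1` it is the
sign change at `x`.
-/

open Set Filter Function Topology


theorem IsPreconnected.sign_eq {X : Type*} [TopologicalSpace X] {s : Set X}
    (hs : IsPreconnected s) {u : X → ℝ} (hu : ContinuousOn u s) (h0 : ∀ y ∈ s, u y ≠ 0)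
    {a b : X} (ha : a ∈ s) (hb : b ∈ s) : SignType.sign (u a) = SignType.sign (u b) := by
  rcases (h0 a ha).lt_or_gt with hua | hua <;> rcases (h0 b hb).lt_or_gt with hub | hub
  · rw [sign_neg hua, sign_neg hub]
  · obtain ⟨y, hy, hy0⟩ := hs.intermediate_value ha hb hu ⟨hua.le, hub.le⟩
    exact absurd hy0 (h0 y hy)
  · obtain ⟨y, hy, hy0⟩ := hs.intermediate_value hb ha hu ⟨hub.le, hua.le⟩
    exact absurd hy0 (h0 y hy)
  · rw [sign_pos hua, sign_pos hub]

theorem zero_lt_mul_of_sign_eq {a b : ℝ} (ha : a ≠ 0) (h : SignType.sign a = SignType.sign b) :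
    0 < a * b := by
  rcases ha.lt_or_gt with ha | ha
  · exact mul_pos_of_neg_of_neg ha (sign_eq_neg_one_iff.mp (h ▸ sign_neg ha))
  · exact mul_pos ha (sign_eq_one_iff.mp (h ▸ sign_pos ha))

theorem HasDerivAt.eventually_pos_mul_slope {u : ℝ → ℝ} {c x₀ : ℝ} (hu : HasDerivAt u c x₀)
    (hc : c ≠ 0) : ∀ᶠ z in 𝓝[≠] x₀, 0 < c * slope u x₀ z := by
  have := (hasDerivAt_iff_tendsto_slope.mp hu).const_mul c
  exact this.eventually (lt_mem_nhds (mul_self_pos.mpr hc))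

theorem HasDerivAt.exists_sign_change {u : ℝ → ℝ} {c x₀ : ℝ} (hu : HasDerivAt u c x₀)
    (hc : c ≠ 0) (h0 : u x₀ = 0) :
    ∃ ρ > 0, (∀ z ∈ Icc (x₀ - ρ) (x₀ + ρ), u z = 0 → z = x₀) ∧
      u (x₀ - ρ) * u (x₀ + ρ) < 0 := by
  obtain ⟨r, hr, hball⟩ := Metric.eventually_nhds_iff.mp
    (eventually_nhdsWithin_iff.mp (hu.eventually_pos_mul_slope hc))
  have key : ∀ z, |z - x₀| < r → z ≠ x₀ → 0 < c * u z * (z - x₀) := fun z hz hne => by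
    have hpos := hball (by rwa [Real.dist_eq]) hne
    rw [slope_def_field, h0, sub_zero] at hpos
    have hd : z - x₀ ≠ 0 := sub_ne_zero.mpr hne
    calc 0 < c * (u z / (z - x₀)) * (z - x₀) ^ 2 := mul_pos hpos (by positivity)
      _ = c * u z * (z - x₀) := by field_simp
  refine ⟨r / 2, half_pos hr, fun z hz hz0 => ?_, ?_⟩
  · by_contra hne
    have := key z (abs_sub_lt_iff.mpr ⟨by linarith [hz.2], by linarith [hz.1]⟩) hne
    simp [hz0] at this
  · have hl := key (x₀ - r / 2) (by rw [abs_lt]; constructor <;> linarith) (by linarith)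
    have hr' := key (x₀ + r / 2) (by rw [abs_lt]; constructor <;> linarith) (by linarith)
    rw [show x₀ - r / 2 - x₀ = -(r / 2) by ring] at hl
    rw [show x₀ + r / 2 - x₀ = r / 2 by ring] at hr'
    have hprod : c ^ 2 * (u (x₀ - r / 2) * u (x₀ + r / 2)) < 0 := by
      nlinarith [mul_neg_of_neg_of_pos (by nlinarith : c * u (x₀ - r / 2) < 0)
        (by nlinarith : 0 < c * u (x₀ + r / 2))]
    exact neg_of_mul_neg_right hprod (sq_nonneg c)

theorem not_isPeriodicPt_of_lt {α : Type*} [Preorder α] {g : α → α} {s : Set α}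
    (hs : MapsTo g s s) (hlt : ∀ z ∈ s, g z < z) {k : ℕ} (hk : 0 < k) {x : α} (hx : x ∈ s) :
    ¬ IsPeriodicPt g k x := fun hper => by
  have hmem : ∀ j, g^[j] x ∈ s := fun j => hs.iterate j hx
  have hanti : StrictAnti fun j => g^[j] x := strictAnti_nat_of_succ_lt fun j => by
    rw [iterate_succ_apply']
    exact hlt _ (hmem j)
  exact (hanti hk).ne hper.eq

theorem not_isPeriodicPt_of_forall_ne {g : ℝ → ℝ} (hg : Continuous g) (hfix : ∀ z, g z ≠ z)
    {k : ℕ} (hk : 0 < k) (x : ℝ) : ¬ IsPeriodicPt g k x := by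
  have hsign : ∀ z, SignType.sign (g z - z) = SignType.sign (g x - x) := fun z =>
    isPreconnected_univ.sign_eq (hg.sub continuous_id).continuousOn
      (fun y _ => sub_ne_zero.mpr (hfix y)) (mem_univ z) (mem_univ x)
  rcases (sub_ne_zero.mpr (hfix x)).lt_or_gt with hx | hx
  · refine not_isPeriodicPt_of_lt (mapsTo_univ g univ) (fun z _ => ?_) hk (mem_univ x)
    rw [← sub_neg, ← sign_eq_neg_one_iff, hsign, sign_neg hx]
  · -- in `ℝᵒᵈ` the hypothesis `g z < z` of `not_isPeriodicPt_of_lt` reads `z < g z`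
    refine not_isPeriodicPt_of_lt (α := ℝᵒᵈ) (mapsTo_univ g univ) (fun z _ => ?_) hk (mem_univ x)
    have hz : OrderDual.ofDual z < g (OrderDual.ofDual z) := by
      rw [← sub_pos, ← sign_eq_one_iff, hsign, sign_pos hx]
    exact hz

theorem hasDerivAt_iterate {g : ℝ → ℝ} (hg : Differentiable ℝ g) (k : ℕ) (x : ℝ) :
    HasDerivAt g^[k] (∏ j ∈ Finset.range k, deriv g (g^[j] x)) x := by
  induction k generalizing x with
  | zero => simpa using hasDerivAt_id x
  | succ k ih =>
    rw [iterate_succ, Finset.prod_range_succ']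
    simpa only [iterate_succ_apply, iterate_zero_apply] using (ih (g x)).comp x (hg x).hasDerivAt

namespace Unimodal

variable {g : ℝ → ℝ}

theorem continuous (hg : Unimodal g) : Continuous g := hg.1.continuous

theorem differentiable (hg : Unimodal g) : Differentiable ℝ g := hg.1.differentiable one_ne_zero

theorem strictMonoOn (hg : Unimodal g) : StrictMonoOn g (Iic 0) :=
  strictMonoOn_of_deriv_pos (convex_Iic 0) hg.continuous.continuousOn fun x hx =>
    hg.2.1 x (by simpa using hx)

theorem strictAntiOn (hg : Unimodal g) : StrictAntiOn g (Ici 0) :=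
  strictAntiOn_of_deriv_neg (convex_Ici 0) hg.continuous.continuousOn fun x hx =>
    hg.2.2.1 x (by simpa using hx)

theorem le_apply_zero (hg : Unimodal g) (x : ℝ) : g x ≤ g 0 := by
  rcases le_total x 0 with hx | hx
  · exact hg.strictMonoOn.monotoneOn hx (mem_Iic.mpr le_rfl) hx
  · exact hg.strictAntiOn.antitoneOn (mem_Ici.mpr le_rfl) hx hx

theorem min_le_of_mem_Icc (hg : Unimodal g) {a b y : ℝ} (hy : y ∈ Icc a b) :
    min (g a) (g b) ≤ g y := by
  rcases le_total y 0 with hy0 | hy0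
  · exact (min_le_left _ _).trans (hg.strictMonoOn.monotoneOn (hy.1.trans hy0) hy0 hy.1)
  · exact (min_le_right _ _).trans (hg.strictAntiOn.antitoneOn hy0 (hy0.trans hy.2) hy.2)

/-- The minimum `μ` of a periodic orbit is the image of an orbit point in `[μ, g 0]`, so by
unimodality it is either a fixed point or at least `g (g 0)`. -/
theorem mem_Icc_of_isPeriodicPt (hg : Unimodal g) {M : ℝ} (hfix : ∀ x, g x = x → -M ≤ x)
    {k : ℕ} (hk : 0 < k) {x : ℝ} (hx : IsPeriodicPt g k x) :
    x ∈ Icc (min (-M) (g (g 0))) (g 0) := by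
  have hle : ∀ y, IsPeriodicPt g k y → y ≤ g 0 := fun y hy => by
    rw [← hy.eq, ← Nat.sub_add_cancel hk, iterate_succ_apply']
    exact hg.le_apply_zero _
  obtain ⟨j₀, -, hj₀⟩ := (Finset.range k).exists_min_image (fun j => g^[j] x)
    ⟨0, Finset.mem_range.mpr hk⟩
  set μ := g^[j₀] x
  have hmin : ∀ j, μ ≤ g^[j] x := fun j => by
    rw [← hx.iterate_mod_apply]
    exact hj₀ _ (Finset.mem_range.mpr (Nat.mod_lt _ hk))
  have hμ : IsPeriodicPt g k μ := hx.apply_iterate j₀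
  have hpre : g (g^[k - 1] μ) = μ := by
    rw [← iterate_succ_apply' g (k - 1) μ, Nat.succ_eq_add_one, Nat.sub_add_cancel hk]
    exact hμ.eq
  have hmem : g^[k - 1] μ ∈ Icc μ (g 0) :=
    ⟨by simpa only [μ, ← iterate_add_apply] using hmin _, hle _ (hμ.apply_iterate _)⟩
  have hbound : min (-M) (g (g 0)) ≤ μ := by
    have hquasi := hg.min_le_of_mem_Icc hmem
    rw [hpre] at hquasi
    rcases min_le_iff.mp hquasi with h | h
    · have hgμ : μ ≤ g μ := by simpa only [μ, ← iterate_succ_apply'] using hmin (j₀ + 1)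
      exact (min_le_left _ _).trans (hfix μ (le_antisymm h hgμ))
    · exact (min_le_right _ _).trans h
  exact ⟨hbound.trans (hmin 0), hle x hx⟩

end Unimodal

namespace Horseshoe

variable {g : ℝ → ℝ}

/-- Periodic orbits of a horseshoe stay in `[a, a₁] ∪ [b₁, b]`: left of the repelling fixed
point `a` orbits decrease forever, right of `b` they are mapped left of `a`, and `(a₁, b₁)` is
mapped right of `b`. -/
theorem one_lt_abs_deriv_of_isPeriodicPt (hg : Horseshoe g) {k : ℕ} (hk : 0 < k) {x : ℝ}
    (hx : IsPeriodicPt g k x) : 1 < |deriv g x| := by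
  obtain ⟨hu, a, c, hac, hfix, a₁, b₁, b, haa₁, ha₁b₁, hb₁b, hgb, hga₁, hgb₁, hexp⟩ := hg
  have hfixed : ∀ z, g z = z → z = a ∨ z = c := fun z hz => (Set.ext_iff.mp hfix z).mp hz
  have hga : g a = a := (Set.ext_iff.mp hfix a).mpr (Or.inl rfl)
  have hd0 : ¬ 1 < |deriv g 0| := by norm_num [hu.2.2.2]
  have ha0 : a < 0 := by
    by_contra! h
    have := hu.strictAntiOn h (h.trans haa₁.le) haa₁
    rw [hga₁, hga] at this
    linarith
  have ha₁0 : a₁ < 0 := by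
    by_contra! h
    exact hd0 (hexp 0 (Or.inl ⟨ha0.le, h⟩))
  have hb0 : 0 < b := by
    by_contra! h
    have := hu.strictMonoOn (by linarith : a ≤ 0) h (by linarith : a < b)
    rw [hga, hgb] at this
    exact lt_irrefl _ this
  have hb₁0 : 0 < b₁ := by
    by_contra! h
    exact hd0 (hexp 0 (Or.inr ⟨h, hb0.le⟩))
  have hleft : ∀ z < a, g z < z := by
    have hda : 1 < deriv g a := by
      simpa [abs_of_pos (hu.2.1 a ha0)] using hexp a (Or.inl ⟨le_rfl, haa₁.le⟩)
    have hu' : HasDerivAt (fun z => g z - z) (deriv g a - 1) a :=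
      (hu.differentiable a).hasDerivAt.sub (hasDerivAt_id a)
    have hle : 𝓝[<] a ≤ 𝓝[≠] a := nhdsWithin_mono a fun z hz => ne_of_lt hz
    obtain ⟨z₁, hpos, hz₁⟩ := (((hu'.eventually_pos_mul_slope (by linarith)).filter_mono
      hle).and self_mem_nhdsWithin).exists
    rw [slope_def_field, hga, sub_self, sub_zero] at hpos
    have hneg : g z₁ - z₁ < 0 := by
      rcases div_pos_iff.mp (pos_of_mul_pos_right hpos (by linarith)) with h | h
      · linarith [h.2]
      · exact h.1
    intro z hz
    have hsign := isPreconnected_Iio.sign_eq (u := fun z => g z - z)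
      (hu.continuous.sub continuous_id).continuousOn
      (fun y hy hy0 => by rcases hfixed y (sub_eq_zero.mp hy0) with rfl | rfl <;>
        linarith [mem_Iio.mp hy]) hz hz₁
    rwa [sign_neg hneg, sign_eq_neg_one_iff, sub_neg] at hsign
  have horbit_ge : ∀ y, IsPeriodicPt g k y → a ≤ y := fun y hy => by
    by_contra! h
    exact not_isPeriodicPt_of_lt (fun z hz => (hleft z hz).trans hz) hleft hk h hy
  have horbit_le : ∀ y, IsPeriodicPt g k y → y ≤ b := fun y hy => by
    by_contra! h
    have := hu.strictAntiOn hb0.le (hb0.trans h).le h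
    rw [hgb] at this
    exact (horbit_ge _ hy.apply).not_gt this
  refine hexp x ?_
  rcases le_or_gt x a₁ with h1 | h1
  · exact Or.inl ⟨horbit_ge x hx, h1⟩
  rcases le_or_gt b₁ x with h2 | h2
  · exact Or.inr ⟨h2, horbit_le x hx⟩
  have hgx : b < g x := by
    rcases le_total x 0 with h0 | h0
    · simpa only [hga₁] using hu.strictMonoOn ha₁0.le h0 h1
    · simpa only [hgb₁] using hu.strictAntiOn h0 hb₁0.le h2
  exact absurd (horbit_le _ hx.apply) (not_le.mpr hgx)

theorem one_lt_abs_deriv_iterate (hg : Horseshoe g) {k : ℕ} (hk : 0 < k) {x : ℝ}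
    (hx : IsPeriodicPt g k x) : 1 < |deriv g^[k] x| := by
  rw [(hasDerivAt_iterate hg.1.differentiable k x).deriv, Finset.abs_prod]
  calc (1 : ℝ) = ∏ _j ∈ Finset.range k, (1 : ℝ) := by simp
    _ < ∏ j ∈ Finset.range k, |deriv g (g^[j] x)| :=
      Finset.prod_lt_prod_of_nonempty (fun _ _ => one_pos)
        (fun j _ => hg.one_lt_abs_deriv_of_isPeriodicPt hk (hx.apply_iterate j))
        ⟨0, Finset.mem_range.mpr hk⟩

end Horseshoe

theorem exists_isClopen_connectedComponent_subset {X : Type*} [TopologicalSpace X] [T2Space X]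
    [CompactSpace X] (x : X) {F : Set X} (hF : IsClosed F)
    (hFx : Disjoint F (connectedComponent x)) :
    ∃ C, IsClopen C ∧ connectedComponent x ⊆ C ∧ Disjoint F C := by
  rw [connectedComponent_eq_iInter_isClopen, disjoint_iff_inter_eq_empty] at hFx
  obtain ⟨u, hu⟩ := hF.isCompact.elim_finite_subfamily_closed _ (fun s => s.2.1.isClosed) hFx
  exact ⟨⋂ s ∈ u, s.1, isClopen_biInter_finset fun s _ => s.2.1,
    subset_iInter₂ fun s _ => s.2.1.connectedComponent_subset s.2.2,
    disjoint_iff_inter_eq_empty.mpr hu⟩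

theorem IsCompact.exists_isolated_piece {X : Type*} [MetricSpace X] {Z F : Set X}
    (hZ : IsCompact Z) (hF : IsClosed F) {p : X} (hp : p ∈ Z)
    (hFp : Disjoint F (connectedComponentIn Z p)) :
    ∃ K, IsCompact K ∧ connectedComponentIn Z p ⊆ K ∧ K ⊆ Z ∧ Disjoint F K ∧
      ∃ δ > 0, Z ∩ Metric.thickening δ K ⊆ K := by
  have := isCompact_iff_compactSpace.mp hZ
  rw [connectedComponentIn_eq_image hp] at hFp ⊢
  obtain ⟨C, hC, hpC, hFC⟩ := exists_isClopen_connectedComponent_subset (⟨p, hp⟩ : Z)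
    (hF.preimage continuous_subtype_val)
    (Set.disjoint_left.mpr fun z hzF hz => Set.disjoint_left.mp hFp hzF ⟨z, hz, rfl⟩)
  obtain ⟨U, hU, hUC⟩ := isOpen_induced_iff.mp hC.isOpen
  have hK : IsCompact (((↑) : Z → X) '' C) := hC.isClosed.isCompact.image continuous_subtype_val
  obtain ⟨δ, hδ, hthick⟩ := hK.exists_thickening_subset_open hU (by
    rintro _ ⟨z, hz, rfl⟩
    rw [← hUC] at hz
    exact hz)
  refine ⟨_, hK, image_mono hpC, image_subset_iff.mpr fun z _ => z.2, ?_, δ, hδ, ?_⟩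
  · exact Set.disjoint_left.mpr fun y hyF ⟨z, hzC, hzy⟩ =>
      Set.disjoint_left.mp hFC (show (z : X) ∈ F from hzy ▸ hyF) hzC
  · rintro y ⟨hyZ, hy⟩
    exact ⟨⟨y, hyZ⟩, by rw [← hUC]; exact hthick hy, rfl⟩

/-- For the signs `s` of a function at the nodes of a grid, `jumpSum s A` is a discrete degree
of the function on the union of the cells `m ∈ A`. -/
def jumpSum (s : ℤ → ℤ) (A : Finset ℤ) : ℤ := ∑ m ∈ A, (s (m + 1) - s m)

theorem jumpSum_eq_sum_sdiff_sub_sum_sdiff (s : ℤ → ℤ) (A : Finset ℤ) :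
    jumpSum s A = ∑ k ∈ A.map (addRightEmbedding 1) \ A, s k
      - ∑ k ∈ A \ A.map (addRightEmbedding 1), s k := by
  rw [Finset.sum_sdiff_sub_sum_sdiff, Finset.sum_map, jumpSum, Finset.sum_sub_distrib]
  rfl

theorem jumpSum_congr {s s' : ℤ → ℤ} {A : Finset ℤ}
    (h : ∀ k, (k - 1 ∈ A ↔ k ∉ A) → s k = s' k) : jumpSum s A = jumpSum s' A := by
  have hmem : ∀ k, k ∈ A.map (addRightEmbedding 1) ↔ k - 1 ∈ A := fun k => by
    simp only [Finset.mem_map, addRightEmbedding_apply]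
    exact ⟨fun ⟨a, ha, hak⟩ => by rwa [← hak, add_sub_cancel_right], fun hk => ⟨k - 1, hk, by ring⟩⟩
  rw [jumpSum_eq_sum_sdiff_sub_sum_sdiff, jumpSum_eq_sum_sdiff_sub_sum_sdiff]
  congr 1 <;> refine Finset.sum_congr rfl fun k hk => h k ?_
  · rw [Finset.mem_sdiff, hmem] at hk
    tauto
  · rw [Finset.mem_sdiff, hmem] at hk
    tauto

theorem jumpSum_eq_of_subset {s : ℤ → ℤ} {A B : Finset ℤ} (hBA : B ⊆ A)
    (h : ∀ m ∈ A, m ∉ B → s (m + 1) = s m) : jumpSum s B = jumpSum s A :=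
  Finset.sum_subset hBA fun m hm hmB => sub_eq_zero.mpr (h m hm hmB)

noncomputable def gridSign (g : ℝ × ℝ → ℝ) (o ε t : ℝ) (m : ℤ) : ℤ :=
  SignType.sign (g (t, o + m * ε))

def nearCells (K : Set (ℝ × ℝ)) (o ε h t : ℝ) : Set ℤ :=
  {m | ∃ q ∈ K, |q.1 - t| ≤ 2 * h ∧ |q.2 - (o + m * ε)| ≤ 2 * ε}

section Continuation

variable {g : ℝ × ℝ → ℝ} {K : Set (ℝ × ℝ)} {δ o ε h : ℝ}

theorem nearCells_finite (hK : IsCompact K) (hε : 0 < ε) (o h t : ℝ) :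
    (nearCells K o ε h t).Finite := by
  obtain ⟨R, hR⟩ := hK.exists_bound_of_continuousOn continuous_snd.continuousOn
  set r := (R + 2 * ε + |o|) / ε
  refine (Set.finite_Icc (-⌈r⌉) ⌈r⌉).subset ?_
  rintro m ⟨q, hq, -, hqm⟩
  have hRq := abs_le.mp (hR q hq)
  have hqm := abs_le.mp hqm
  have hlo : -r ≤ m := by
    rw [neg_le, le_div_iff₀ hε]
    linarith [neg_abs_le o, le_abs_self o]
  have hhi : (m : ℝ) ≤ r := by
    rw [le_div_iff₀ hε]
    linarith [neg_abs_le o, le_abs_self o]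
  have hceil := Int.le_ceil r
  constructor
  · exact_mod_cast (neg_le_neg hceil).trans hlo
  · exact_mod_cast hhi.trans hceil

theorem mem_of_mem_nearCells
    (hKiso : {p : ℝ × ℝ | p.1 ∈ Icc (0 : ℝ) 1 ∧ g p = 0} ∩ Metric.thickening δ K ⊆ K)
    (hh : 3 * h < δ) (hε : 3 * ε < δ) {t : ℝ} {m : ℤ} (hm : m ∈ nearCells K o ε h t)
    {p : ℝ × ℝ} (hp : p.1 ∈ Icc (0 : ℝ) 1) (hgp : g p = 0) (ht : |p.1 - t| ≤ h)
    (hx : |p.2 - (o + m * ε)| ≤ ε) : p ∈ K := by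
  obtain ⟨q, hq, hq1, hq2⟩ := hm
  refine hKiso ⟨⟨hp, hgp⟩, Metric.mem_thickening_iff.mpr ⟨q, hq, ?_⟩⟩
  rw [Prod.dist_eq, Real.dist_eq, Real.dist_eq, max_lt_iff]
  constructor
  · linarith [abs_sub_le p.1 t q.1, abs_sub_comm t q.1]
  · linarith [abs_sub_le p.2 (o + m * ε) q.2, abs_sub_comm (o + m * ε) q.2]

theorem gridSign_succ_eq (hg : ContinuousOn g (Icc 0 1 ×ˢ univ)) (hε : 0 ≤ ε) {t : ℝ}
    (ht : t ∈ Icc (0 : ℝ) 1) {m : ℤ}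
    (h0 : ∀ z ∈ Icc (o + m * ε) (o + m * ε + ε), g (t, z) ≠ 0) :
    gridSign g o ε t (m + 1) = gridSign g o ε t m := by
  have := isPreconnected_Icc.sign_eq (u := fun z => g (t, z))
    (hg.comp (continuousOn_const.prodMk continuousOn_id) fun z _ => ⟨ht, mem_univ _⟩) h0
    (right_mem_Icc.mpr (by linarith)) (left_mem_Icc.mpr (by linarith))
  simp only [gridSign, Int.cast_add, Int.cast_one, add_mul, one_mul, ← add_assoc]
  exact congrArg _ this

theorem jumpSum_gridSign_strip (hg : ContinuousOn g (Icc 0 1 ×ˢ univ))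
    (hKiso : {p : ℝ × ℝ | p.1 ∈ Icc (0 : ℝ) 1 ∧ g p = 0} ∩ Metric.thickening δ K ⊆ K)
    (hh0 : 0 ≤ h) (hh : 3 * h < δ) (hε0 : 0 ≤ ε) (hε : 3 * ε < δ)
    {t : ℝ} (ht0 : 0 ≤ t) (ht1 : t + h ≤ 1) {A : Finset ℤ}
    (hA : ↑A = nearCells K o ε h t) :
    jumpSum (gridSign g o ε t) A = jumpSum (gridSign g o ε (t + h)) A := by
  have memA : ∀ j, j ∈ A ↔ j ∈ nearCells K o ε h t := fun j => by rw [← Finset.mem_coe, hA]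
  refine jumpSum_congr fun k hk => congrArg ((↑) : SignType → ℤ) ?_
  have hsub : Icc t (t + h) ⊆ Icc 0 1 := Icc_subset_Icc ht0 ht1
  refine isPreconnected_Icc.sign_eq (u := fun τ => g (τ, o + k * ε))
    (hg.comp (continuousOn_id.prodMk continuousOn_const) fun τ hτ => ⟨hsub hτ, mem_univ _⟩)
    (fun τ hτ hzero => ?_) (left_mem_Icc.mpr (by linarith)) (right_mem_Icc.mpr (by linarith))
  have hτt : |τ - t| ≤ h := abs_sub_le_iff.mpr ⟨by linarith [hτ.2], by linarith [hτ.1]⟩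
  have hk0 : |o + k * ε - (o + k * ε)| ≤ ε := by simpa using hε0
  have hk1 : |o + k * ε - (o + ((k - 1 : ℤ) : ℝ) * ε)| ≤ ε := by
    rw [Int.cast_sub, Int.cast_one, show o + k * ε - (o + (k - 1) * ε) = ε by ring,
      abs_of_nonneg hε0]
  have hKτ : (τ, o + k * ε) ∈ K := by
    by_cases hkA : k ∈ A
    · exact mem_of_mem_nearCells hKiso hh hε ((memA k).mp hkA) (hsub hτ) hzero hτt hk0
    · exact mem_of_mem_nearCells hKiso hh hε ((memA _).mp (hk.mpr hkA)) (hsub hτ) hzero hτt hk1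
  have h1 : k - 1 ∈ A := (memA _).mpr ⟨_, hKτ, by linarith, by linarith⟩
  have h2 : k ∈ A := (memA _).mpr ⟨_, hKτ, by linarith, by linarith⟩
  exact hk.mp h1 h2

theorem jumpSum_gridSign_junction (hg : ContinuousOn g (Icc 0 1 ×ˢ univ))
    (hKiso : {p : ℝ × ℝ | p.1 ∈ Icc (0 : ℝ) 1 ∧ g p = 0} ∩ Metric.thickening δ K ⊆ K)
    (hh0 : 0 ≤ h) (hh : 3 * h < δ) (hε0 : 0 ≤ ε) (hε : 3 * ε < δ)
    {t : ℝ} (ht0 : 0 ≤ t) (ht1 : t + h ≤ 1) {A B : Finset ℤ}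
    (hA : ↑A = nearCells K o ε h t) (hB : ↑B = nearCells K o ε h (t + h)) :
    jumpSum (gridSign g o ε (t + h)) A = jumpSum (gridSign g o ε (t + h)) B := by
  have memA : ∀ j, j ∈ A ↔ j ∈ nearCells K o ε h t := fun j => by rw [← Finset.mem_coe, hA]
  have memB : ∀ j, j ∈ B ↔ j ∈ nearCells K o ε h (t + h) := fun j => by
    rw [← Finset.mem_coe, hB]
  have ht : t + h ∈ Icc (0 : ℝ) 1 := ⟨by linarith, ht1⟩
  have hcell : ∀ (m : ℤ), ∀ z ∈ Icc (o + m * ε) (o + m * ε + ε), |z - (o + m * ε)| ≤ ε :=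
    fun m z hz => abs_sub_le_iff.mpr ⟨by linarith [hz.2], by linarith [hz.1]⟩
  calc jumpSum (gridSign g o ε (t + h)) A = jumpSum (gridSign g o ε (t + h)) (A ∩ B) := by
        refine (jumpSum_eq_of_subset Finset.inter_subset_left fun m hmA hm => ?_).symm
        refine gridSign_succ_eq hg hε0 ht fun z hz hzero => hm (Finset.mem_inter.mpr ⟨hmA, ?_⟩)
        have hK := mem_of_mem_nearCells (p := (t + h, z)) hKiso hh hε ((memA m).mp hmA) ht hzero
          (by simp [abs_of_nonneg hh0]) (hcell m z hz)
        exact (memB m).mpr ⟨_, hK, by simpa using hh0, by linarith [hcell m z hz]⟩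
    _ = jumpSum (gridSign g o ε (t + h)) B := by
        refine jumpSum_eq_of_subset Finset.inter_subset_right fun m hmB hm => ?_
        refine gridSign_succ_eq hg hε0 ht fun z hz hzero => hm (Finset.mem_inter.mpr ⟨?_, hmB⟩)
        have hK := mem_of_mem_nearCells (p := (t + h, z)) hKiso hh hε ((memB m).mp hmB) ht hzero
          (by simpa using hh0) (hcell m z hz)
        exact (memA m).mpr ⟨_, hK, by simpa [abs_of_nonneg hh0] using by linarith,
          by linarith [hcell m z hz]⟩

theorem jumpSum_gridSign_top (hg : ContinuousOn g (Icc 0 1 ×ˢ univ))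
    (hKiso : {p : ℝ × ℝ | p.1 ∈ Icc (0 : ℝ) 1 ∧ g p = 0} ∩ Metric.thickening δ K ⊆ K)
    (hh0 : 0 ≤ h) (hh : 3 * h < δ) (hε0 : 0 < ε) (hε : 3 * ε < δ) {x : ℝ}
    (hx : ((1 : ℝ), x) ∈ K) (hK1 : ∀ q ∈ K, q.1 = 1 → q.2 = x) {A : Finset ℤ}
    (hA : ↑A = nearCells K (x - ε / 2) ε h 1) :
    jumpSum (gridSign g (x - ε / 2) ε 1) A
      = gridSign g (x - ε / 2) ε 1 1 - gridSign g (x - ε / 2) ε 1 0 := by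
  have memA : ∀ j, j ∈ A ↔ j ∈ nearCells K (x - ε / 2) ε h 1 := fun j => by
    rw [← Finset.mem_coe, hA]
  have h0A : (0 : ℤ) ∈ A := (memA 0).mpr
    ⟨_, hx, by simpa using hh0, by rw [abs_le]; constructor <;> push_cast <;> linarith⟩
  rw [← jumpSum_eq_of_subset (Finset.singleton_subset_iff.mpr h0A), jumpSum,
    Finset.sum_singleton, zero_add]
  intro m hmA hm0
  refine gridSign_succ_eq hg hε0.le ⟨zero_le_one, le_rfl⟩ fun z hz hzero => hm0 ?_
  have hzK := mem_of_mem_nearCells (p := (1, z)) hKiso hh hε ((memA m).mp hmA)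
    ⟨zero_le_one, le_rfl⟩ hzero (by simpa using hh0)
    (abs_sub_le_iff.mpr ⟨by linarith [hz.2], by linarith [hz.1]⟩)
  obtain rfl : z = x := hK1 _ hzK rfl
  have hlt : (m : ℝ) < 1 := by nlinarith [hz.1]
  have hgt : (-1 : ℝ) < m := by nlinarith [hz.2]
  have hlt' : m < 1 := by exact_mod_cast hlt
  have hgt' : -1 < m := by exact_mod_cast hgt
  rw [Finset.mem_singleton]
  omega

theorem jumpSum_gridSign_eq_zero (hg : ContinuousOn g (Icc 0 1 ×ˢ univ))
    (hKiso : {p : ℝ × ℝ | p.1 ∈ Icc (0 : ℝ) 1 ∧ g p = 0} ∩ Metric.thickening δ K ⊆ K)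
    (hh0 : 0 ≤ h) (hh : 3 * h < δ) (hε0 : 0 ≤ ε) (hε : 3 * ε < δ) (hK0 : ∀ q ∈ K, 2 * h < q.1)
    {A : ℝ → Finset ℤ} (hA : ∀ t, ↑(A t) = nearCells K o ε h t) {j : ℕ} (hj : j * h ≤ 1) :
    jumpSum (gridSign g o ε (j * h)) (A (j * h)) = 0 := by
  induction j with
  | zero =>
    have hA0 : A 0 = ∅ := by
      rw [← Finset.coe_eq_empty, hA, eq_empty_iff_forall_notMem]
      rintro m ⟨q, hq, hq1, -⟩
      linarith [le_abs_self (q.1 - 0), hK0 q hq]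
    rw [Nat.cast_zero, zero_mul, hA0]
    rfl
  | succ j ih =>
    rw [Nat.cast_succ, add_one_mul] at hj ⊢
    have hjh : 0 ≤ j * h := by positivity
    rw [← jumpSum_gridSign_junction hg hKiso hh0 hh hε0 hε hjh hj (hA _) (hA _),
      ← jumpSum_gridSign_strip hg hKiso hh0 hh hε0 hε hjh hj (hA _)]
    exact ih (by linarith)

/-- The discrete degree of `g t` on the cells near `K` does not change with `t`; it vanishes
near `t = 0`, where there are no such cells, hence also at `t = 1`, where it measures the sign
change of `g 1` at `x`. -/
theorem zero_lt_mul_of_isolated_compact_piece (hg : ContinuousOn g (Icc 0 1 ×ˢ univ))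
    (hK : IsCompact K) (hδ : 0 < δ)
    (hKiso : {p : ℝ × ℝ | p.1 ∈ Icc (0 : ℝ) 1 ∧ g p = 0} ∩ Metric.thickening δ K ⊆ K)
    (hK0 : ∀ q ∈ K, 0 < q.1) {x ρ : ℝ} (hx : ((1 : ℝ), x) ∈ K)
    (hK1 : ∀ q ∈ K, q.1 = 1 → q.2 = x) (hρ : 0 < ρ)
    (hzero : ∀ z ∈ Icc (x - ρ) (x + ρ), g (1, z) = 0 → z = x) :
    0 < g (1, x - ρ) * g (1, x + ρ) := by
  obtain ⟨q₀, hq₀, hmin⟩ := hK.exists_isMinOn ⟨_, hx⟩ continuous_fst.continuousOn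
  obtain ⟨N, hN⟩ := exists_nat_one_div_lt (lt_min (by positivity : 0 < δ / 3)
    (half_pos (hK0 q₀ hq₀)))
  set h : ℝ := 1 / (N + 1)
  set ε : ℝ := min (δ / 4) ρ
  have hh0 : 0 < h := by positivity
  have hh : 3 * h < δ := by linarith [min_le_left (δ / 3) (q₀.1 / 2)]
  have hhK : ∀ q ∈ K, 2 * h < q.1 := fun q hq => by
    linarith [min_le_right (δ / 3) (q₀.1 / 2), show q₀.1 ≤ q.1 from hmin hq]
  have hε0 : 0 < ε := lt_min (by positivity) hρ
  have hε : 3 * ε < δ := by linarith [min_le_left (δ / 4) ρ]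
  -- nodes `x - ε / 2 + m * ε`: at `t = 1` only the cell `0` contains a zero, its midpoint `x`
  choose A hA using fun t => (nearCells_finite hK hε0 (x - ε / 2) h t).exists_finset_coe
  have hNh : ((N + 1 : ℕ) : ℝ) * h = 1 := by
    simp only [h]
    push_cast
    field_simp
  have htop := jumpSum_gridSign_eq_zero hg hKiso hh0.le hh hε0.le hε hhK hA hNh.le
  rw [hNh, jumpSum_gridSign_top hg hKiso hh0.le hh hε0 hε hx hK1 (hA 1), sub_eq_zero] at htop
  have hside : ∀ a b, x - ρ ≤ a → a ≤ b → b ≤ x + ρ → (x < a ∨ b < x) →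
      SignType.sign (g (1, a)) = SignType.sign (g (1, b)) := fun a b hxa hab hbx hx' =>
    isPreconnected_Icc.sign_eq (u := fun z => g (1, z))
      (hg.comp (continuousOn_const.prodMk continuousOn_id) fun z _ => ⟨⟨zero_le_one, le_rfl⟩,
        mem_univ _⟩)
      (fun z hz hz0 => by
        have := hzero z ⟨hxa.trans hz.1, hz.2.trans hbx⟩ hz0
        rcases hx' with hx' | hx' <;> linarith [hz.1, hz.2])
      (left_mem_Icc.mpr hab) (right_mem_Icc.mpr hab)
  have hε2 : ε / 2 < ρ := by linarith [min_le_right (δ / 4) ρ]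
  refine zero_lt_mul_of_sign_eq (fun h0 => by linarith [hzero _ ⟨le_rfl, by linarith⟩ h0]) ?_
  have hl := hside (x - ρ) (x - ε / 2) le_rfl (by linarith) (by linarith) (Or.inr (by linarith))
  have hr := hside (x + ε / 2) (x + ρ) (by linarith) (by linarith) le_rfl (Or.inl (by linarith))
  simp only [gridSign, Int.cast_zero, Int.cast_one, zero_mul, add_zero, one_mul] at htop
  rw [hl, ← hr, show x + ε / 2 = x - ε / 2 + ε by ring]
  exact (by decide : Function.Injective ((↑) : SignType → ℤ)) htop.symm

end Continuation

section Gmap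

variable {f : ℝ → ℝ → ℝ} {n : ℕ}

theorem gmap_of_odd (ho : Odd n) (t x : ℝ) : Gmap f n t x = (f t)^[n] x - x := if_pos ho

theorem gmap_of_not_odd_of_eq (ho : ¬ Odd n) {t x : ℝ} (hx : (f t)^[n / 2] x = x) :
    Gmap f n t x = deriv (f t)^[n / 2] x + 1 := by
  rw [Gmap, if_neg ho, if_pos hx]

theorem gmap_of_not_odd_of_ne (ho : ¬ Odd n) {t x : ℝ} (hx : (f t)^[n / 2] x ≠ x) :
    Gmap f n t x = ((f t)^[n] x - x) / ((f t)^[n / 2] x - x) := by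
  rw [Gmap, if_neg ho, if_neg hx]

theorem half_add_half_of_not_odd (ho : ¬ Odd n) : n / 2 + n / 2 = n := by
  obtain ⟨m, rfl⟩ := Nat.not_odd_iff_even.mp ho
  omega

theorem isPeriodicPt_of_gmap_eq_zero {t x : ℝ} (h : Gmap f n t x = 0) :
    IsPeriodicPt (f t) n x := by
  by_cases ho : Odd n
  · rw [gmap_of_odd ho] at h
    exact sub_eq_zero.mp h
  by_cases hx : (f t)^[n / 2] x = x
  · change (f t)^[n] x = x
    rw [← half_add_half_of_not_odd ho, iterate_add_apply, hx, hx]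
  · rw [gmap_of_not_odd_of_ne ho hx, div_eq_zero_iff] at h
    exact sub_eq_zero.mp (h.resolve_right (sub_ne_zero.mpr hx))

theorem exists_gmap_eq_deriv_add_one (ho : ¬ Odd n) {t : ℝ} (hd : Differentiable ℝ (f t))
    (x : ℝ) : ∃ ξ ∈ uIcc x ((f t)^[n / 2] x), Gmap f n t x = deriv (f t)^[n / 2] ξ + 1 := by
  set F := (f t)^[n / 2] with hFdef
  by_cases hx : F x = x
  · exact ⟨x, left_mem_uIcc, gmap_of_not_odd_of_eq ho hx⟩
  have hF : Differentiable ℝ F := hd.iterate _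
  obtain ⟨ξ, hξ, hslope⟩ : ∃ ξ ∈ uIcc x (F x), deriv F ξ = slope F x (F x) := by
    rcases lt_or_gt_of_ne (Ne.symm hx) with hlt | hlt
    · obtain ⟨ξ, hξ, h⟩ :=
        exists_deriv_eq_slope' F hlt hF.continuous.continuousOn hF.differentiableOn
      exact ⟨ξ, Icc_subset_uIcc (Ioo_subset_Icc_self hξ), h⟩
    · obtain ⟨ξ, hξ, h⟩ :=
        exists_deriv_eq_slope' F hlt hF.continuous.continuousOn hF.differentiableOn
      exact ⟨ξ, Icc_subset_uIcc' (Ioo_subset_Icc_self hξ), h.trans (slope_comm F _ _)⟩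
  refine ⟨ξ, hξ, ?_⟩
  have hFF : (f t)^[n] x = F (F x) := by
    rw [hFdef, ← iterate_add_apply, half_add_half_of_not_odd ho]
  have hden : F x - x ≠ 0 := sub_ne_zero.mpr hx
  rw [hslope, slope_def_field, gmap_of_not_odd_of_ne ho hx, hFF, ← hFdef]
  field_simp
  ring

end Gmap

namespace ContFullFamily

variable {f : ℝ → ℝ → ℝ} {n : ℕ}

theorem unimodal (hf : ContFullFamily f) {t : ℝ} (ht : t ∈ Icc (0 : ℝ) 1) : Unimodal (f t) :=
  hf.1 t ht

theorem continuousOn_iterate (hf : ContFullFamily f) (k : ℕ) :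
    ContinuousOn (fun p : ℝ × ℝ => (f p.1)^[k] p.2) (Icc 0 1 ×ˢ univ) := by
  induction k with
  | zero => exact continuousOn_snd
  | succ k ih =>
    refine (ih.comp (continuousOn_fst.prodMk hf.2.1) fun p hp => ⟨hp.1, mem_univ _⟩).congr
      fun p _ => ?_
    simp [iterate_succ_apply]

theorem continuousOn_deriv_iterate (hf : ContFullFamily f) (k : ℕ) :
    ContinuousOn (fun p : ℝ × ℝ => deriv (f p.1)^[k] p.2) (Icc 0 1 ×ˢ univ) := by
  refine (continuousOn_finsetProd (Finset.range k) fun j _ => hf.2.2.1.comp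
    (continuousOn_fst.prodMk (hf.continuousOn_iterate j)) fun p hp => ⟨hp.1, mem_univ _⟩).congr
    fun p hp => ?_
  exact (hasDerivAt_iterate (hf.unimodal hp.1).differentiable k p.2).deriv

theorem continuousOn_gmap (hf : ContFullFamily f) (n : ℕ) :
    ContinuousOn (fun p : ℝ × ℝ => Gmap f n p.1 p.2) (Icc 0 1 ×ˢ univ) := by
  by_cases ho : Odd n
  · exact ((hf.continuousOn_iterate n).sub continuousOn_snd).congr fun p _ => gmap_of_odd ho _ _
  intro p₀ hp₀
  have hF := (hf.continuousOn_iterate (n / 2) p₀ hp₀).tendsto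
  by_cases hx₀ : (f p₀.1)^[n / 2] p₀.2 = p₀.2
  · choose! ξ hξ hG using fun p (hp : p ∈ Icc (0 : ℝ) 1 ×ˢ (univ : Set ℝ)) =>
      exists_gmap_eq_deriv_add_one ho (hf.unimodal hp.1).differentiable p.2
    have hsnd := (continuous_snd.tendsto p₀).mono_left (nhdsWithin_le_nhds (s := Icc 0 1 ×ˢ univ))
    rw [hx₀] at hF
    have hξlim : Tendsto ξ (𝓝[Icc 0 1 ×ˢ univ] p₀) (𝓝 p₀.2) := by
      refine tendsto_of_tendsto_of_tendsto_of_le_of_le' (by simpa using hsnd.inf_nhds hF)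
        (by simpa using hsnd.sup_nhds hF) ?_ ?_ <;>
      filter_upwards [self_mem_nhdsWithin] with p hp
      exacts [(hξ p hp).1, (hξ p hp).2]
    have hpair : Tendsto (fun p => (p.1, ξ p)) (𝓝[Icc 0 1 ×ˢ univ] p₀)
        (𝓝[Icc 0 1 ×ˢ univ] p₀) :=
      tendsto_nhdsWithin_iff.mpr ⟨((continuous_fst.tendsto p₀).mono_left
        nhdsWithin_le_nhds).prodMk_nhds hξlim, by
          filter_upwards [self_mem_nhdsWithin] with p hp using ⟨hp.1, mem_univ _⟩⟩
    have hD := ((hf.continuousOn_deriv_iterate (n / 2)) p₀ hp₀).tendsto.comp hpair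
    change Tendsto _ _ (𝓝 (Gmap f n p₀.1 p₀.2))
    rw [gmap_of_not_odd_of_eq ho hx₀]
    refine (hD.add_const 1).congr' ?_
    filter_upwards [self_mem_nhdsWithin] with p hp using (hG p hp).symm
  · have hden := (hf.continuousOn_iterate (n / 2)).sub continuousOn_snd p₀ hp₀
    have hden0 : (f p₀.1)^[n / 2] p₀.2 - p₀.2 ≠ 0 := sub_ne_zero.mpr hx₀
    refine ((((hf.continuousOn_iterate n).sub continuousOn_snd) p₀ hp₀).div hden
      hden0).congr_of_eventuallyEq ?_ (gmap_of_not_odd_of_ne ho hx₀)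
    filter_upwards [hden.eventually_ne hden0] with p hp
    exact gmap_of_not_odd_of_ne ho fun h => hp (by simp [h])

theorem exists_bound_isPeriodicPt (hf : ContFullFamily f) :
    ∃ L U : ℝ, ∀ t ∈ Icc (0 : ℝ) 1, ∀ k, 0 < k → ∀ x, IsPeriodicPt (f t) k x → x ∈ Icc L U := by
  obtain ⟨M, -, hM⟩ := hf.2.2.2.2.2
  have hslice : ∀ k : ℕ, ContinuousOn (fun t => (f t)^[k] 0) (Icc 0 1) := fun k =>
    (hf.continuousOn_iterate k).comp (continuousOn_id.prodMk continuousOn_const)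
      fun t ht => ⟨ht, mem_univ _⟩
  obtain ⟨C₁, hC₁⟩ := isCompact_Icc.exists_bound_of_continuousOn (hslice 1)
  obtain ⟨C₂, hC₂⟩ := isCompact_Icc.exists_bound_of_continuousOn (hslice 2)
  refine ⟨min (-M) (-C₂), C₁, fun t ht k hk x hx => ?_⟩
  have h := (hf.unimodal ht).mem_Icc_of_isPeriodicPt (fun y hy => (hM t ht y hy).1) hk hx
  have h₁ := abs_le.mp (hC₁ t ht)
  have h₂ := abs_le.mp (hC₂ t ht)
  simp only [iterate_succ_apply', iterate_zero_apply] at h₁ h₂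
  exact ⟨(min_le_min le_rfl h₂.1).trans h.1, h.2.trans h₁.2⟩

theorem isCompact_zset (hf : ContFullFamily f) (hn : 0 < n) : IsCompact (Zset f n) := by
  obtain ⟨L, U, hLU⟩ := hf.exists_bound_isPeriodicPt
  have hclosed : IsClosed (Zset f n) := by
    convert (hf.continuousOn_gmap n).preimage_isClosed_of_isClosed
      (isClosed_Icc.prod isClosed_univ) (isClosed_singleton (x := 0)) using 1
    ext p
    simp [Zset]
  exact (isCompact_Icc.prod isCompact_Icc).of_isClosed_subset hclosed fun p hp =>
    ⟨hp.1, hLU p.1 hp.1 n hn p.2 (isPeriodicPt_of_gmap_eq_zero hp.2)⟩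

theorem fst_pos_of_mem_zset (hf : ContFullFamily f) (hn : 0 < n) {p : ℝ × ℝ}
    (hp : p ∈ Zset f n) : 0 < p.1 := by
  refine hp.1.1.lt_of_ne fun h0 => ?_
  have hper := isPeriodicPt_of_gmap_eq_zero hp.2
  rw [← h0] at hper
  exact not_isPeriodicPt_of_forall_ne (hf.unimodal ⟨le_rfl, zero_le_one⟩).continuous hf.2.2.2.1
    hn _ hper

/-- Zeros of `Gmap f n 1` are simple because the horseshoe `f 1` expands along periodic orbits. -/
theorem exists_hasDerivAt_gmap_one (hf : ContFullFamily f) (hn : 0 < n) {x₀ : ℝ}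
    (h0 : Gmap f n 1 x₀ = 0) : ∃ c ≠ 0, HasDerivAt (fun x => Gmap f n 1 x) c x₀ := by
  have hh : Horseshoe (f 1) := hf.2.2.2.2.1
  have hd : Differentiable ℝ (f 1) := hh.1.differentiable
  have hper := isPeriodicPt_of_gmap_eq_zero h0
  have hN : HasDerivAt (fun x => (f 1)^[n] x - x) (deriv (f 1)^[n] x₀ - 1) x₀ :=
    ((hd.iterate n) x₀).hasDerivAt.sub (hasDerivAt_id x₀)
  have hN0 : deriv (f 1)^[n] x₀ - 1 ≠ 0 := fun h => by
    have := hh.one_lt_abs_deriv_iterate hn hper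
    rw [sub_eq_zero.mp h] at this
    norm_num at this
  by_cases ho : Odd n
  · exact ⟨_, hN0, by simpa only [gmap_of_odd ho] using hN⟩
  have hm : 0 < n / 2 := by
    obtain ⟨m, rfl⟩ := Nat.not_odd_iff_even.mp ho
    omega
  have hx₀ : (f 1)^[n / 2] x₀ ≠ x₀ := fun hfix => by
    have := hh.one_lt_abs_deriv_iterate hm hfix
    rw [gmap_of_not_odd_of_eq ho hfix] at h0
    rw [eq_neg_of_add_eq_zero_left h0] at this
    norm_num at this
  have hD : HasDerivAt (fun x => (f 1)^[n / 2] x - x) (deriv (f 1)^[n / 2] x₀ - 1) x₀ :=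
    ((hd.iterate _) x₀).hasDerivAt.sub (hasDerivAt_id x₀)
  have hD0 : (f 1)^[n / 2] x₀ - x₀ ≠ 0 := sub_ne_zero.mpr hx₀
  refine ⟨_, ?_, (hN.div hD hD0).congr_of_eventuallyEq ?_⟩
  · rw [sub_eq_zero.mpr hper.eq, zero_mul, sub_zero]
    exact div_ne_zero (mul_ne_zero hN0 hD0) (pow_ne_zero _ hD0)
  · filter_upwards [hD.continuousAt.eventually_ne hD0] with x hx
    exact gmap_of_not_odd_of_ne ho fun h => hx (by simp [h])

end ContFullFamily

theorem stmt11_general (f : ℝ → ℝ → ℝ) (hf : ContFullFamily f) (n : ℕ) (hn : 0 < n)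
    (V : Set (ℝ × ℝ)) (hV : IsPPComponent f n V)
    (hne : (V ∩ {p : ℝ × ℝ | p.1 = 1}).Nonempty) :
    ∃ p ∈ V ∩ {p : ℝ × ℝ | p.1 = 1}, ∃ q ∈ V ∩ {p : ℝ × ℝ | p.1 = 1}, p ≠ q := by
  by_contra! hone
  obtain ⟨⟨t, x⟩, hpV, rfl : t = 1⟩ := hne
  obtain ⟨p₀, -, rfl⟩ := hV
  have hpZ : ((1 : ℝ), x) ∈ Zset f n := connectedComponentIn_subset _ _ hpV
  rw [connectedComponentIn_eq hpV] at hone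
  obtain ⟨c, hc, hderiv⟩ := hf.exists_hasDerivAt_gmap_one hn hpZ.2
  obtain ⟨ρ, hρ, hiso, hsign⟩ := hderiv.exists_sign_change hc hpZ.2
  set F : Set (ℝ × ℝ) := {p | p.1 = 1 ∧ p.2 ∉ Ioo (x - ρ) (x + ρ)}
  have hF : IsClosed F := (isClosed_eq continuous_fst continuous_const).inter
    (isOpen_Ioo.preimage continuous_snd).isClosed_compl
  have hFV : Disjoint F (connectedComponentIn (Zset f n) (1, x)) :=
    Set.disjoint_left.mpr fun q ⟨hq1, hqx⟩ hqV => hqx (by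
      rw [hone q ⟨hqV, hq1⟩ (1, x) ⟨mem_connectedComponentIn hpZ, rfl⟩]
      exact ⟨by linarith, by linarith⟩)
  obtain ⟨K, hK, hVK, hKZ, hFK, δ, hδ, hKiso⟩ :=
    (hf.isCompact_zset hn).exists_isolated_piece hF hpZ hFV
  refine lt_asymm hsign (zero_lt_mul_of_isolated_compact_piece (hf.continuousOn_gmap n) hK hδ
    hKiso (fun q hq => hf.fst_pos_of_mem_zset hn (hKZ hq)) (hVK (mem_connectedComponentIn hpZ))
    (fun q hq hq1 => ?_) hρ hiso)
  have hqx : q.2 ∈ Ioo (x - ρ) (x + ρ) := by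
    by_contra h
    exact Set.disjoint_left.mp hFK ⟨hq1, h⟩ hq
  have hq0 := (hKZ hq).2
  rw [hq1] at hq0
  exact hiso q.2 (Ioo_subset_Icc_self hqx) hq0

/-- Let `V` be a periodic point component of `G_n⁻¹(0)` of period `n`.
If `V` meets the line `{t = 1}`, then it meets it in at least two points. -/
theorem stmt11 (f : ℝ → ℝ → ℝ) (hf : ContFullFamily f) (n : ℕ) (hn : 0 < n)
    (V : Set (ℝ × ℝ)) (hV : IsPPComponent f n V) (hVper : CompPeriod f V n)
    (hne : (V ∩ {p : ℝ × ℝ | p.1 = 1}).Nonempty) :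
    ∃ p ∈ V ∩ {p : ℝ × ℝ | p.1 = 1}, ∃ q ∈ V ∩ {p : ℝ × ℝ | p.1 = 1}, p ≠ q :=
  stmt11_general f hf n hn V hV hne
end

section
/- Let f and g be C¹ unimodal maps, and let p and q be periodic points of f and g respectively such that (i) p and q both have minimal period n, (ii) the orbits of p under f and of q under g do not contain the critical point 0, and (iii) σ(p) = σ(q). Then at least one of the following holds: (a) I(p,f) = I(q,g); (b) the minimal period of I(q,g) is n and I(p,f) = μ(I(q,g)); (c) the minimal period of I(p,f) is n and I(q,g) = μ(I(p,f)). -/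
/-!
Write `x i = f^[i] p` and `y i = g^[i] q`, and let `k` be the time just before the orbit of
`p` reaches its maximum, so that `x k` is the orbit point nearest to the critical point on
its side. Itineraries are monotone in the point, so the shift of `I(p,f)` starting at `k + 1`
is maximal, and likewise for `g`. If the itineraries differ at two times `i`, `j` with
`x i < x j`, then for one map both points lie on the `R` side and for the other both lie on
the `L` side; one map reverses their order and the other keeps it, against `σ(p) = σ(q)`.
So the itineraries differ along at most one residue class mod `n`, and that class is the
one of `k`: an orbit point on the side of `x k` lies beyond it, in both orbits. Hence
`I(p,f)` is `I(q,g)` flipped at the times `≡ k (mod n)`. One of the two itineraries has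
minimal period `n`, since flipping a single residue class cannot leave both with a smaller
period, and for that one the flip is exactly `μ`.
-/

/-- Admissible sequences are functions `ℕ → Bool`, with `false = L`, `true = R`.
`shiftSeq k A` is the `k`-fold shift `S^k A`. -/
def shiftSeq (k : ℕ) (A : ℕ → Bool) : ℕ → Bool := fun i => A (i + k)

/-- The block `A_0 ⋯ A_{n-1}` is even: it contains an even number of `R`'s. -/
def BlockEven (A : ℕ → Bool) (n : ℕ) : Prop :=
  Even ((Finset.range n).filter fun i => A i = true).card

/-- The order on admissible sequences: `A < B` iff at the first index `n` of
disagreement, either `A_0 ⋯ A_{n-1}` is even and `A n = L < R = B n`, or it is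
odd and `A n = R > L = B n`. -/
def SeqLT (A B : ℕ → Bool) : Prop :=
  ∃ n : ℕ, (∀ i < n, A i = B i) ∧ A n ≠ B n ∧
    ((BlockEven A n ∧ A n = false ∧ B n = true) ∨
     (¬ BlockEven A n ∧ A n = true ∧ B n = false))

def SeqLE (A B : ℕ → Bool) : Prop := SeqLT A B ∨ A = B

/-- `A` is maximal: `S^k A ≤ A` for all `k ≥ 0`. -/
def SeqMaximal (A : ℕ → Bool) : Prop := ∀ k : ℕ, SeqLE (shiftSeq k A) A

/-- `A` is periodic of period `n > 0`. -/
def IsPeriodicSeq (A : ℕ → Bool) (n : ℕ) : Prop := 0 < n ∧ ∀ i, A (i + n) = A i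

/-- The minimal period of `A` (and `0` if `A` is not periodic). -/
noncomputable def minPer (A : ℕ → Bool) : ℕ := sInf {n : ℕ | IsPeriodicSeq A n}

/-- Flip (`L ↔ R`) the symbol of `A` at every position congruent to `n - 1`
modulo `n`. -/
def flipAt (n : ℕ) (A : ℕ → Bool) : ℕ → Bool :=
  fun i => if i % n = n - 1 then !(A i) else A i

/-- The map `μ` on periodic admissible sequences: if `n` is the minimal period of
`A` and `m` (with `0 ≤ m ≤ n-1`) is the unique integer such that `S^m A` is
maximal, then `μ A = S^{n-m} B`, where `B` is obtained from `S^m A` by flipping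
the symbol at every position congruent to `n - 1` modulo `n`. -/
noncomputable def muSeq (A : ℕ → Bool) : ℕ → Bool :=
  shiftSeq (minPer A - sInf {m : ℕ | SeqMaximal (shiftSeq m A)})
    (flipAt (minPer A)
      (shiftSeq (sInf {m : ℕ | SeqMaximal (shiftSeq m A)}) A))

/-- The map `ν`: `ν A = μ A` if `per (μ A) = per A`, and `ν A = S^{per A / 2} A`
otherwise. -/
noncomputable def nuSeq (A : ℕ → Bool) : ℕ → Bool :=
  if minPer (muSeq A) = minPer A then muSeq A else shiftSeq (minPer A / 2) A

open scoped Classical in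
/-- The itinerary `I(x, f)` of a point whose orbit avoids `0`: the `i`-th symbol
is `R` (`true`) if `f^[i] x > 0` and `L` (`false`) if `f^[i] x < 0`. -/
noncomputable def itinerary (f : ℝ → ℝ) (x : ℝ) : ℕ → Bool :=
  fun i => if 0 < f^[i] x then true else false

/-- `p` and `q` (periodic points of minimal period `n` of `f` and `g`
respectively) have the same shuffle `σ(p) = σ(q)`: the orderings of their orbits
agree. -/
def SameShuffle (f g : ℝ → ℝ) (p q : ℝ) (n : ℕ) : Prop :=
  ∀ i j : ℕ, i < n → j < n → (f^[i] p < f^[j] p ↔ g^[i] q < g^[j] q)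

lemma shiftSeq_shiftSeq (j k : ℕ) (A : ℕ → Bool) :
    shiftSeq j (shiftSeq k A) = shiftSeq (j + k) A := by
  funext i
  simp only [shiftSeq, add_assoc]

lemma blockEven_congr {A B : ℕ → Bool} {n : ℕ} (h : ∀ i < n, A i = B i) :
    BlockEven A n ↔ BlockEven B n := by
  unfold BlockEven
  rw [Finset.filter_congr fun i hi => by rw [h i (Finset.mem_range.1 hi)]]

lemma blockEven_succ (A : ℕ → Bool) (n : ℕ) :
    BlockEven A (n + 1) ↔ (BlockEven (shiftSeq 1 A) n ↔ A 0 = false) := by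
  simp only [BlockEven, Finset.card_filter, Finset.sum_range_succ', shiftSeq]
  cases A 0 <;> simp [Nat.even_add_one] <;> rfl

-- The body of `SeqLT` at a fixed index: `SeqLT A B` is `∃ n, SeqLTAt A B n` by definition.
def SeqLTAt (A B : ℕ → Bool) (n : ℕ) : Prop :=
  (∀ i < n, A i = B i) ∧ A n ≠ B n ∧
    ((BlockEven A n ∧ A n = false ∧ B n = true) ∨
     (¬ BlockEven A n ∧ A n = true ∧ B n = false))

namespace SeqLTAt

variable {A B : ℕ → Bool} {n : ℕ}

lemma head_of_zero (h : SeqLTAt A B 0) : A 0 = false ∧ B 0 = true := by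
  obtain ⟨-, -, ⟨-, hA, hB⟩ | ⟨hodd, -⟩⟩ := h
  · exact ⟨hA, hB⟩
  · exact absurd (by simp [BlockEven]) hodd

lemma head_eq (h : SeqLTAt A B (n + 1)) : A 0 = B 0 :=
  h.1 0 n.succ_pos

lemma shiftSeq_of_head_false (h : SeqLTAt A B (n + 1)) (h0 : A 0 = false) :
    SeqLTAt (shiftSeq 1 A) (shiftSeq 1 B) n := by
  obtain ⟨hagree, hne, hcase⟩ := h
  rw [blockEven_succ, h0, iff_true_intro rfl, iff_true] at hcase
  exact ⟨fun i hi => hagree (i + 1) (by omega), hne, hcase⟩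

lemma shiftSeq_of_head_true (h : SeqLTAt A B (n + 1)) (h0 : A 0 = true) :
    SeqLTAt (shiftSeq 1 B) (shiftSeq 1 A) n := by
  obtain ⟨hagree, hne, hcase⟩ := h
  have hBA : BlockEven (shiftSeq 1 B) n ↔ BlockEven (shiftSeq 1 A) n :=
    blockEven_congr fun i hi => (hagree (i + 1) (by omega)).symm
  rw [blockEven_succ, h0] at hcase
  refine ⟨fun i hi => (hagree (i + 1) (by omega)).symm, hne.symm, ?_⟩
  rw [hBA]
  simp only [shiftSeq] at hcase ⊢
  tauto

lemma index_eq {m : ℕ} (h : SeqLTAt A B n) (h' : SeqLTAt B A m) : n = m := by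
  rcases Nat.lt_trichotomy n m with hnm | hnm | hnm
  · exact absurd (h'.1 n hnm).symm h.2.1
  · exact hnm
  · exact absurd (h.1 m hnm).symm h'.2.1

end SeqLTAt

lemma seqLTAt_or_seqLTAt {A B : ℕ → Bool} {n : ℕ} (hagree : ∀ i < n, A i = B i)
    (hne : A n ≠ B n) : SeqLTAt A B n ∨ SeqLTAt B A n := by
  have hAB := blockEven_congr hagree
  unfold SeqLTAt
  cases hA : A n <;> cases hB : B n <;> simp_all <;> tauto

lemma seqLT_or_seqLT_of_ne {A B : ℕ → Bool} (h : A ≠ B) : SeqLT A B ∨ SeqLT B A := by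
  classical
  have hex : ∃ n, A n ≠ B n := Function.ne_iff.1 h
  have hagree : ∀ i < Nat.find hex, A i = B i := fun i hi => not_not.1 (Nat.find_min hex hi)
  exact (seqLTAt_or_seqLTAt hagree (Nat.find_spec hex)).imp (⟨_, ·⟩) (⟨_, ·⟩)

lemma SeqLT.not_seqLT {A B : ℕ → Bool} (h : SeqLT A B) : ¬ SeqLT B A := by
  rintro ⟨m, h' : SeqLTAt B A m⟩
  obtain ⟨n, h : SeqLTAt A B n⟩ := h
  obtain rfl := h.index_eq h'
  have hAB := blockEven_congr h.1
  obtain ⟨-, -, hcase⟩ := h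
  obtain ⟨-, -, hcase'⟩ := h'
  rw [hAB] at hcase
  by_cases hB : BlockEven B n <;> simp_all

lemma seqLE_antisymm {A B : ℕ → Bool} (h : SeqLE A B) (h' : SeqLE B A) : A = B := by
  rcases h with h | h
  · rcases h' with h' | h'
    · exact absurd h' h.not_seqLT
    · exact h'.symm
  · exact h

-- `flipAt n = flipMod n (n - 1)`
def flipMod (n c : ℕ) (A : ℕ → Bool) : ℕ → Bool :=
  fun i => if i % n = c then !(A i) else A i

lemma flipMod_flipMod (n c : ℕ) (A : ℕ → Bool) : flipMod n c (flipMod n c A) = A := by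
  funext i
  unfold flipMod
  split_ifs <;> simp

lemma flipMod_periodic {A : ℕ → Bool} {n : ℕ} (c : ℕ) (hA : Function.Periodic A n) :
    Function.Periodic (flipMod n c A) n := by
  intro i
  simp only [flipMod, Nat.add_mod_right, hA i]

lemma minPer_le {A : ℕ → Bool} {d : ℕ} (h : IsPeriodicSeq A d) : minPer A ≤ d :=
  Nat.sInf_le h

lemma isPeriodicSeq_minPer {A : ℕ → Bool} {d : ℕ} (h : IsPeriodicSeq A d) :
    IsPeriodicSeq A (minPer A) :=
  Nat.sInf_mem (s := {m | IsPeriodicSeq A m}) ⟨d, h⟩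

lemma shiftSeq_add_of_periodic {A : ℕ → Bool} {n : ℕ} (hA : Function.Periodic A n) (a : ℕ) :
    shiftSeq (a + n) A = shiftSeq a A := by
  funext i
  simp only [shiftSeq, ← add_assoc]
  exact hA _

lemma shiftSeq_mod_of_periodic {A : ℕ → Bool} {n : ℕ} (hA : Function.Periodic A n) (a : ℕ) :
    shiftSeq (a % n) A = shiftSeq a A := by
  funext i
  simp only [shiftSeq]
  rw [← hA.map_mod_nat, Nat.add_mod_mod, hA.map_mod_nat]

lemma periodic_of_shiftSeq_eq {A : ℕ → Bool} {n a d : ℕ} (hA : Function.Periodic A n)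
    (ha : a ≤ n) (h : shiftSeq a A = shiftSeq (a + d) A) : Function.Periodic A d := by
  intro j
  have := congrFun h (j + n - a)
  simp only [shiftSeq] at this
  rw [show j + n - a + a = j + n by omega, show j + n - a + (a + d) = j + d + n by omega,
    hA, hA] at this
  exact this.symm

lemma shiftSeq_eq_of_seqMaximal {A : ℕ → Bool} {n a b : ℕ} (hA : Function.Periodic A n)
    (hab : a ≤ b) (hba : b ≤ a + n) (ha : SeqMaximal (shiftSeq a A))
    (hb : SeqMaximal (shiftSeq b A)) : shiftSeq a A = shiftSeq b A := by
  apply seqLE_antisymm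
  · have := hb (a + n - b)
    rwa [shiftSeq_shiftSeq, Nat.sub_add_cancel hba, shiftSeq_add_of_periodic hA] at this
  · have := ha (b - a)
    rwa [shiftSeq_shiftSeq, Nat.sub_add_cancel hab] at this

lemma sInf_seqMaximal_eq {A : ℕ → Bool} {n M : ℕ} (hA : Function.Periodic A n)
    (hmin : minPer A = n) (hM : M < n) (hmax : SeqMaximal (shiftSeq M A)) :
    sInf {m | SeqMaximal (shiftSeq m A)} = M := by
  set m := sInf {m | SeqMaximal (shiftSeq m A)}
  have hmM : m ≤ M := Nat.sInf_le hmax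
  have hmmax : SeqMaximal (shiftSeq m A) :=
    Nat.sInf_mem (s := {m | SeqMaximal (shiftSeq m A)}) ⟨M, hmax⟩
  by_contra hne
  have hper : Function.Periodic A (M - m) := by
    refine periodic_of_shiftSeq_eq (a := m) hA (by omega) ?_
    rw [Nat.add_sub_cancel' hmM]
    exact shiftSeq_eq_of_seqMaximal (n := n) hA hmM (by omega) hmmax hmax
  have := minPer_le ⟨by omega, hper⟩
  omega

lemma muSeq_eq_flipMod {A : ℕ → Bool} {n k : ℕ} (hn : 0 < n) (hA : Function.Periodic A n)
    (hmin : minPer A = n) (hmax : SeqMaximal (shiftSeq (k + 1) A)) :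
    muSeq A = flipMod n (k % n) A := by
  set M := (k + 1) % n
  have hM : M < n := Nat.mod_lt _ hn
  rw [← shiftSeq_mod_of_periodic hA] at hmax
  unfold muSeq
  rw [hmin, sInf_seqMaximal_eq hA hmin hM hmax]
  funext i
  have hflip : (i + (n - M)) % n = n - 1 ↔ i % n = k % n := by
    rw [← Nat.mod_eq_of_lt (Nat.sub_lt hn one_pos), ← ZMod.natCast_eq_natCast_iff',
      ← ZMod.natCast_eq_natCast_iff', Nat.cast_add, Nat.cast_sub hM.le, Nat.cast_pred hn,
      ZMod.natCast_self, ZMod.natCast_mod, Nat.cast_succ]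
    constructor <;> intro h <;> linear_combination h
  simp only [shiftSeq, flipAt, flipMod, hflip]
  rw [show i + (n - M) + M = i + n by omega, hA]

-- `d'` is not a period of `A` at `c`, so `A (c + d') = !A c = !A (c + d)`; hence `c + d + d'`
-- is flipped, i.e. `d + d' = n`, and then `A (c + d') = A (c + n) = A c`.
lemma not_periodic_flipMod {A : ℕ → Bool} {n c d d' : ℕ} (hA : Function.Periodic A n)
    (hc : c < n) (hd : 0 < d) (hdn : d < n) (hdA : Function.Periodic A d) (hd' : 0 < d')
    (hd'n : d' < n) : ¬ Function.Periodic (flipMod n c A) d' := by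
  intro hF
  have hshift : ∀ e, 0 < e → e < 2 * n → ((c + e) % n = c ↔ e = n) := by
    refine fun e he he2 =>
      ⟨fun h => ?_, fun h => by rw [h, Nat.add_mod_right, Nat.mod_eq_of_lt hc]⟩
    have hmod : c + e ≡ c + 0 [MOD n] := by rw [add_zero, Nat.ModEq, h, Nat.mod_eq_of_lt hc]
    exact Nat.eq_of_dvd_of_lt_two_mul he.ne'
      (Nat.modEq_zero_iff_dvd.1 (hmod.add_left_cancel' c)) he2
  have hflipped : ∀ e, 0 < e → e < 2 * n → e ≠ n → flipMod n c A (c + e) = A (c + e) :=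
    fun e he he2 hen => if_neg fun h => hen ((hshift e he he2).1 h)
  have h1 : A (c + d') = !A c := by
    have := hF c
    rwa [hflipped d' hd' (by omega) (by omega), flipMod, if_pos (Nat.mod_eq_of_lt hc)] at this
  have h2 : A (c + (d + d')) = !A (c + d) := by
    rw [show c + (d + d') = c + d' + d by ring, hdA, h1, hdA]
  have hsum : d + d' = n := by
    by_contra hne
    have := hF (c + d)
    rw [add_assoc, hflipped _ (by omega) (by omega) hne, hflipped d hd (by omega) (by omega),
      h2] at this
    simp at this
  have h3 : A (c + d') = A c := by
    rw [← hdA, show c + d' + d = c + n by omega, hA]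
  simp [h1] at h3

lemma minPer_eq_or_minPer_flipMod_eq {A : ℕ → Bool} {n c : ℕ} (hn : 0 < n)
    (hA : Function.Periodic A n) (hc : c < n) :
    minPer A = n ∨ minPer (flipMod n c A) = n := by
  have hAn : IsPeriodicSeq A n := ⟨hn, hA⟩
  have hFn : IsPeriodicSeq (flipMod n c A) n := ⟨hn, flipMod_periodic c hA⟩
  obtain ⟨hd, hdA⟩ := isPeriodicSeq_minPer hAn
  obtain ⟨hd', hdF⟩ := isPeriodicSeq_minPer hFn
  by_contra! h
  exact not_periodic_flipMod hA hc hd (lt_of_le_of_ne (minPer_le hAn) h.1) hdA hd'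
    (lt_of_le_of_ne (minPer_le hFn) h.2) hdF

lemma itinerary_eq_true_iff {f : ℝ → ℝ} {x : ℝ} {i : ℕ} :
    itinerary f x i = true ↔ 0 < f^[i] x := by
  unfold itinerary
  split_ifs <;> simp_all

lemma itinerary_eq_false_iff {f : ℝ → ℝ} {x : ℝ} {i : ℕ} :
    itinerary f x i = false ↔ f^[i] x ≤ 0 := by
  rw [← Bool.not_eq_true, itinerary_eq_true_iff, not_lt]

lemma itinerary_apply_eq_iff {f g : ℝ → ℝ} {a b : ℝ} {i j : ℕ} :
    itinerary f a i = itinerary g b j ↔ (0 < f^[i] a ↔ 0 < g^[j] b) := by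
  rw [Bool.eq_iff_iff, itinerary_eq_true_iff, itinerary_eq_true_iff]

lemma shiftSeq_itinerary (f : ℝ → ℝ) (x : ℝ) (k : ℕ) :
    shiftSeq k (itinerary f x) = itinerary f (f^[k] x) := by
  funext i
  simp only [shiftSeq, itinerary, Function.iterate_add_apply]

lemma itinerary_periodic {f : ℝ → ℝ} {x : ℝ} {n : ℕ} (hx : Function.IsPeriodicPt f n x) :
    Function.Periodic (itinerary f x) n := by
  intro i
  simp only [itinerary, Function.iterate_add_apply, hx.eq]

namespace Unimodal

variable {f : ℝ → ℝ}

lemma strictMonoOn_Iic (hf : Unimodal f) : StrictMonoOn f (Set.Iic 0) :=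
  strictMonoOn_of_deriv_pos (convex_Iic 0) hf.1.continuous.continuousOn fun x hx =>
    hf.2.1 x (by rwa [interior_Iic] at hx)

lemma strictAntiOn_Ici (hf : Unimodal f) : StrictAntiOn f (Set.Ici 0) :=
  strictAntiOn_of_deriv_neg (convex_Ici 0) hf.1.continuous.continuousOn fun x hx =>
    hf.2.2.1 x (by rwa [interior_Ici] at hx)

-- Induction on the first disagreement: `f` keeps the order on the `L` side and reverses it
-- on the `R` side, which is what the parity rule of `SeqLT` records.
lemma lt_of_seqLT_itinerary (hf : Unimodal f) {a b : ℝ}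
    (h : SeqLT (itinerary f a) (itinerary f b)) : a < b := by
  obtain ⟨N, hN : SeqLTAt (itinerary f a) (itinerary f b) N⟩ := h
  induction N generalizing a b with
  | zero =>
    obtain ⟨hA, hB⟩ := hN.head_of_zero
    exact lt_of_le_of_lt (itinerary_eq_false_iff.1 hA) (itinerary_eq_true_iff.1 hB)
  | succ N ih =>
    have hab0 : (0 < a ↔ 0 < b) := by simpa using itinerary_apply_eq_iff.1 hN.head_eq
    cases h0 : itinerary f a 0 with
    | false =>
      have ha0 : a ≤ 0 := itinerary_eq_false_iff.1 h0
      have hb0 : b ≤ 0 := not_lt.1 fun hb0 => not_lt.2 ha0 (hab0.2 hb0)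
      have := hN.shiftSeq_of_head_false h0
      rw [shiftSeq_itinerary, shiftSeq_itinerary] at this
      exact (hf.strictMonoOn_Iic.lt_iff_lt ha0 hb0).1 (ih this)
    | true =>
      have ha0 : 0 < a := itinerary_eq_true_iff.1 h0
      have := hN.shiftSeq_of_head_true h0
      rw [shiftSeq_itinerary, shiftSeq_itinerary] at this
      exact (hf.strictAntiOn_Ici.lt_iff_gt (hab0.1 ha0).le ha0.le).1 (ih this)

lemma seqLE_itinerary_of_le (hf : Unimodal f) {a b : ℝ} (hab : a ≤ b) :
    SeqLE (itinerary f a) (itinerary f b) := by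
  by_cases heq : itinerary f a = itinerary f b
  · exact Or.inr heq
  · exact (seqLT_or_seqLT_of_ne heq).imp_right fun h =>
      absurd (hf.lt_of_seqLT_itinerary h) (not_lt.2 hab)

lemma seqMaximal_shiftSeq_itinerary (hf : Unimodal f) {p : ℝ} {m : ℕ}
    (hmax : ∀ j, f^[j] p ≤ f^[m] p) : SeqMaximal (shiftSeq m (itinerary f p)) := by
  intro k
  rw [shiftSeq_shiftSeq, shiftSeq_itinerary, shiftSeq_itinerary]
  exact hf.seqLE_itinerary_of_le (hmax _)

lemma iterate_le_of_nonpos (hf : Unimodal f) {p : ℝ} {k l : ℕ}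
    (hmax : ∀ j, f^[j] p ≤ f^[k + 1] p) (hk : f^[k] p ≤ 0) (hl : f^[l] p ≤ 0) :
    f^[l] p ≤ f^[k] p := by
  refine not_lt.1 fun hlt => not_lt.2 (hmax (l + 1)) ?_
  simpa only [Function.iterate_succ_apply'] using hf.strictMonoOn_Iic hk hl hlt

lemma le_iterate_of_pos (hf : Unimodal f) {p : ℝ} {k l : ℕ}
    (hmax : ∀ j, f^[j] p ≤ f^[k + 1] p) (hk : 0 < f^[k] p) (hl : 0 < f^[l] p) :
    f^[k] p ≤ f^[l] p := by
  refine not_lt.1 fun hlt => not_lt.2 (hmax (l + 1)) ?_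
  simpa only [Function.iterate_succ_apply'] using hf.strictAntiOn_Ici hl.le hk.le hlt

end Unimodal

lemma Function.IsPeriodicPt.exists_forall_iterate_le_iterate_succ {α : Type*} [LinearOrder α]
    {f : α → α} {x : α} {n : ℕ} (hn : 0 < n) (hx : Function.IsPeriodicPt f n x) :
    ∃ k, ∀ j, f^[j] x ≤ f^[k + 1] x := by
  obtain ⟨M, -, hM⟩ := Finset.exists_max_image (Finset.range n) (fun j => f^[j] x)
    ⟨0, Finset.mem_range.2 hn⟩
  refine ⟨M + n - 1, fun j => ?_⟩
  rw [Nat.sub_add_cancel (by omega), Function.iterate_add_apply, hx.eq,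
    ← hx.iterate_mod_apply j]
  exact hM _ (Finset.mem_range.2 (Nat.mod_lt _ hn))

-- `SameShuffle` extended from the first period to all times.
def OrbitsSameOrder (f g : ℝ → ℝ) (p q : ℝ) : Prop :=
  ∀ i j : ℕ, f^[i] p < f^[j] p ↔ g^[i] q < g^[j] q

lemma SameShuffle.orbitsSameOrder {f g : ℝ → ℝ} {p q : ℝ} {n : ℕ}
    (hσ : SameShuffle f g p q n) (hn : 0 < n) (hp : Function.IsPeriodicPt f n p)
    (hq : Function.IsPeriodicPt g n q) : OrbitsSameOrder f g p q := by
  intro i j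
  rw [← hp.iterate_mod_apply i, ← hp.iterate_mod_apply j, ← hq.iterate_mod_apply i,
    ← hq.iterate_mod_apply j]
  exact hσ _ _ (Nat.mod_lt _ hn) (Nat.mod_lt _ hn)

namespace OrbitsSameOrder

variable {f g : ℝ → ℝ} {p q : ℝ}

lemma symm (h : OrbitsSameOrder f g p q) : OrbitsSameOrder g f q p :=
  fun i j => (h i j).symm

lemma le_iff_le (h : OrbitsSameOrder f g p q) (i j : ℕ) :
    f^[i] p ≤ f^[j] p ↔ g^[i] q ≤ g^[j] q := by
  rw [← not_lt, ← not_lt, h]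

-- `f` reverses the order of the two points while `g` keeps it.
lemma false_of_pos_of_lt_of_nonpos (h : OrbitsSameOrder f g p q) (hf : Unimodal f)
    (hg : Unimodal g) {i j : ℕ} (hi : 0 < f^[i] p) (hij : f^[i] p < f^[j] p)
    (hj : g^[j] q ≤ 0) : False := by
  have hyij := (h i j).1 hij
  have hx : f^[j + 1] p < f^[i + 1] p := by
    simpa only [Function.iterate_succ_apply'] using
      hf.strictAntiOn_Ici hi.le (hi.trans hij).le hij
  have hy : g^[i + 1] q < g^[j + 1] q := by
    simpa only [Function.iterate_succ_apply'] using
      hg.strictMonoOn_Iic (hyij.le.trans hj) hj hyij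
  exact ((h _ _).1 hx).asymm hy

lemma iterate_eq_of_itinerary_ne (h : OrbitsSameOrder f g p q) (hf : Unimodal f)
    (hg : Unimodal g) {i j : ℕ} (hi : itinerary f p i ≠ itinerary g q i)
    (hj : itinerary f p j ≠ itinerary g q j) : f^[i] p = f^[j] p := by
  have key : ∀ i j, itinerary f p i ≠ itinerary g q i →
      itinerary f p j ≠ itinerary g q j → ¬ f^[i] p < f^[j] p := by
    intro i j hi hj hij
    rw [Ne, itinerary_apply_eq_iff] at hi hj
    by_cases hxi : 0 < f^[i] p
    · exact h.false_of_pos_of_lt_of_nonpos hf hg hxi hij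
        (not_lt.1 fun hyj => hj (iff_of_true (hxi.trans hij) hyj))
    · have hyi : 0 < g^[i] q := by tauto
      have hyij := (h i j).1 hij
      exact h.symm.false_of_pos_of_lt_of_nonpos hg hf hyi hyij
        (not_lt.1 fun hxj => hj (iff_of_true hxj (hyi.trans hyij)))
  exact le_antisymm (not_lt.1 (key j i hj hi)) (not_lt.1 (key i j hi hj))

lemma forall_iterate_le (h : OrbitsSameOrder f g p q) {m : ℕ}
    (hmax : ∀ j, f^[j] p ≤ f^[m] p) : ∀ j, g^[j] q ≤ g^[m] q :=
  fun j => (h.le_iff_le j m).1 (hmax j)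

-- `f^[k] p` is the orbit point nearest to the critical point on its side, so every orbit
-- point on that side lies beyond it; the common order transfers this to the other orbit.
lemma itinerary_apply_eq_of_same_side (h : OrbitsSameOrder f g p q) (hf : Unimodal f)
    {k l : ℕ} (hmax : ∀ j, f^[j] p ≤ f^[k + 1] p) (hk : itinerary f p k = itinerary g q k)
    (hl : itinerary f p l = itinerary f p k) : itinerary g q l = itinerary f p l := by
  rw [itinerary_apply_eq_iff] at hk hl ⊢
  by_cases hxk : 0 < f^[k] p
  · have hxl := hl.2 hxk
    have hyl := (h.le_iff_le k l).1 (hf.le_iterate_of_pos hmax hxk hxl)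
    exact iff_of_true ((hk.1 hxk).trans_le hyl) hxl
  · have hxl : f^[l] p ≤ 0 := not_lt.1 (mt hl.1 hxk)
    have hyl := (h.le_iff_le l k).1 (hf.iterate_le_of_nonpos hmax (not_lt.1 hxk) hxl)
    exact iff_of_false (fun hyl' => hxk (hk.2 (hyl'.trans_le hyl))) (mt hl.1 hxk)

lemma itinerary_eq_of_apply_eq (h : OrbitsSameOrder f g p q) (hf : Unimodal f)
    (hg : Unimodal g) {k : ℕ} (hmax : ∀ j, f^[j] p ≤ f^[k + 1] p)
    (hk : itinerary f p k = itinerary g q k) : itinerary f p = itinerary g q := by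
  funext l
  by_cases hl : itinerary f p l = itinerary f p k
  · exact (h.itinerary_apply_eq_of_same_side hf hmax hk hl).symm
  by_cases hl' : itinerary g q l = itinerary g q k
  · exact h.symm.itinerary_apply_eq_of_same_side hg (h.forall_iterate_le hmax) hk.symm hl'
  rw [Bool.eq_not_iff.2 hl, Bool.eq_not_iff.2 hl', hk]

lemma itinerary_eq_flipMod (h : OrbitsSameOrder f g p q) (hf : Unimodal f)
    (hg : Unimodal g) {n k : ℕ} (hn : 0 < n) (hp : Function.minimalPeriod f p = n)
    (hq : Function.IsPeriodicPt g n q) (hk : itinerary f p k ≠ itinerary g q k) :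
    itinerary f p = flipMod n (k % n) (itinerary g q) := by
  have hpp : Function.IsPeriodicPt f n p := hp ▸ Function.isPeriodicPt_minimalPeriod f p
  funext l
  unfold flipMod
  split_ifs with hl
  · have hx : itinerary f p l = itinerary f p k := itinerary_apply_eq_iff.2 (by
      rw [← hpp.iterate_mod_apply l, hl, hpp.iterate_mod_apply])
    have hy : itinerary g q l = itinerary g q k := itinerary_apply_eq_iff.2 (by
      rw [← hq.iterate_mod_apply l, hl, hq.iterate_mod_apply])
    rw [hx, hy]
    exact Bool.eq_not_iff.2 hk
  · by_contra hne
    have hlk := h.iterate_eq_of_itinerary_ne hf hg hne hk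
    rw [← hpp.iterate_mod_apply l, ← hpp.iterate_mod_apply k] at hlk
    rw [Function.iterate_eq_iterate_iff_of_lt_minimalPeriod (by rw [hp]; exact Nat.mod_lt l hn)
      (by rw [hp]; exact Nat.mod_lt k hn)] at hlk
    exact hl hlk

end OrbitsSameOrder

theorem stmt12_general (f g : ℝ → ℝ) (hf : Unimodal f) (hg : Unimodal g)
    (p q : ℝ) (n : ℕ) (hn : 0 < n)
    (hp : Function.minimalPeriod f p = n) (hq : Function.minimalPeriod g q = n)
    (hσ : SameShuffle f g p q n) :
    itinerary f p = itinerary g q ∨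
    (minPer (itinerary g q) = n ∧ itinerary f p = muSeq (itinerary g q)) ∨
    (minPer (itinerary f p) = n ∧ itinerary g q = muSeq (itinerary f p)) := by
  have hpp : Function.IsPeriodicPt f n p := hp ▸ Function.isPeriodicPt_minimalPeriod f p
  have hqq : Function.IsPeriodicPt g n q := hq ▸ Function.isPeriodicPt_minimalPeriod g q
  have horder := hσ.orbitsSameOrder hn hpp hqq
  obtain ⟨k, hmax⟩ := hpp.exists_forall_iterate_le_iterate_succ hn
  by_cases hk : itinerary f p k = itinerary g q k
  · exact Or.inl (horder.itinerary_eq_of_apply_eq hf hg hmax hk)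
  have hflip := horder.itinerary_eq_flipMod hf hg hn hp hqq hk
  have hmaxf := hf.seqMaximal_shiftSeq_itinerary hmax
  have hmaxg := hg.seqMaximal_shiftSeq_itinerary (horder.forall_iterate_le hmax)
  right
  rcases minPer_eq_or_minPer_flipMod_eq hn (itinerary_periodic hqq) (Nat.mod_lt k hn) with h | h
  · exact Or.inl ⟨h, by rw [hflip, muSeq_eq_flipMod hn (itinerary_periodic hqq) h hmaxg]⟩
  · rw [← hflip] at h
    refine Or.inr ⟨h, ?_⟩
    rw [muSeq_eq_flipMod hn (itinerary_periodic hpp) h hmaxf, hflip, flipMod_flipMod]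

/-- Let `f`, `g` be `C¹` unimodal maps and `p`, `q` periodic points
of `f`, `g` of minimal period `n` whose orbits avoid the critical point `0` and
which have the same shuffle.  Then `I(p,f) = I(q,g)`, or `per I(q,g) = n` and
`I(p,f) = μ(I(q,g))`, or `per I(p,f) = n` and `I(q,g) = μ(I(p,f))`. -/
theorem stmt12 (f g : ℝ → ℝ) (hf : Unimodal f) (hg : Unimodal g)
    (p q : ℝ) (n : ℕ) (hn : 0 < n)
    (hp : Function.minimalPeriod f p = n) (hq : Function.minimalPeriod g q = n)
    (hpc : ∀ i : ℕ, f^[i] p ≠ 0) (hqc : ∀ i : ℕ, g^[i] q ≠ 0)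
    (hσ : SameShuffle f g p q n) :
    itinerary f p = itinerary g q ∨
    (minPer (itinerary g q) = n ∧ itinerary f p = muSeq (itinerary g q)) ∨
    (minPer (itinerary f p) = n ∧ itinerary g q = muSeq (itinerary f p)) :=
  stmt12_general f g hf hg p q n hn hp hq hσ
end
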